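/- arXiv:1605.00329 — 4 statements merged into one kernel-verified Lean document; each statement's English description precedes it below -/
import Mathlib

section
/- The maximum number of regions into which ℝ^d can be partitioned by n hyperplanes equals r(n,d) = ∑_{i=0}^{d} C(n,i); in particular, n hyperplanes in general position in ℝ^d determine exactly ∑_{i=0}^{d} C(n,i) regions. -/
/-!
Every point off the hyperplanes has a sign vector recording on which side of each hyperplane it
lies. The set of points with a given sign vector is an intersection of open half-spaces, hence open
and convex, so the regions are exactly the nonempty such cells.

Cells are counted by deletion and restriction. Removing the hyperplane `H₀`, a region of the
remaining arrangement is split in two by `H₀` if it meets `H₀` and survives intact otherwise, and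
the regions meeting `H₀` are the regions of the arrangement induced on `H₀`, a space of one
dimension less in which the induced hyperplanes are again in general position. This gives
`r(n + 1, d) = r(n, d) + r(n, d - 1)`, which is Pascal's rule for `∑_{i ≤ d} C(n, i)`.
The induction runs through all finite-dimensional inner product spaces and ends in dimension `0`,
where general position forces every offset to be nonzero, leaving a single region.
-/

open scoped RealInnerProductSpace

/-- `n` affine hyperplanes `⟪a i, x⟫ = b i` are in general position if every `k ≤ d` of
them have linearly independent normals (so they intersect in an affine subspace of
dimension `d - k`) together with a common point, and no `d + 1` of them share a point. -/
def GeneralPosition {d n : ℕ} (a : Fin n → EuclideanSpace ℝ (Fin d)) (b : Fin n → ℝ) : Prop :=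
  (∀ s : Finset (Fin n), s.card ≤ d →
      (LinearIndependent ℝ fun i : s => a i) ∧ ∃ x, ∀ i ∈ s, ⟪a i, x⟫ = b i) ∧
    ∀ s : Finset (Fin n), s.card = d + 1 → ¬∃ x, ∀ i ∈ s, ⟪a i, x⟫ = b i

open scoped Topology

theorem ConnectedComponents.natCard_eq_natCard_range {X Y : Type*} [TopologicalSpace X]
    [TopologicalSpace Y] [TotallyDisconnectedSpace Y] {f : X → Y} (hf : Continuous f)
    (hfib : ∀ y, IsPreconnected (f ⁻¹' {y})) :
    Nat.card (ConnectedComponents X) = Nat.card (Set.range f) := by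
  have hinj : Function.Injective hf.connectedComponentsLift := by
    refine ConnectedComponents.surjective_coe.forall₂.2 fun x y hxy => ?_
    simp only [Continuous.connectedComponentsLift_apply_coe] at hxy
    exact ConnectedComponents.coe_eq_coe'.2 <|
      (hfib (f x)).subset_connectedComponent hxy.symm rfl
  have hrange : Set.range hf.connectedComponentsLift = Set.range f := by
    rw [← ConnectedComponents.surjective_coe.range_comp, hf.connectedComponentsLift_comp_coe]
  rw [Nat.card_congr (Equiv.ofInjective _ hinj), hrange]

theorem Set.ncard_eq_ncard_cons_true_add_ncard_cons_false {n : ℕ}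
    (S : Set (Fin (n + 1) → Bool)) :
    S.ncard = {τ | Fin.cons true τ ∈ S}.ncard + {τ | Fin.cons false τ ∈ S}.ncard := by
  have hS : S = Fin.cons true '' {τ | Fin.cons true τ ∈ S} ∪
      Fin.cons false '' {τ | Fin.cons false τ ∈ S} := by
    ext σ
    rw [← Fin.cons_self_tail σ]
    cases σ 0 <;> simp [Fin.cons_right_injective _ |>.eq_iff]
  have hdisj : Disjoint (Fin.cons true '' {τ | Fin.cons true τ ∈ S})
      (Fin.cons false '' {τ | Fin.cons false τ ∈ S}) := by
    refine Set.disjoint_left.2 ?_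
    rintro _ ⟨τ, -, rfl⟩ ⟨τ', -, h⟩
    simpa using congrFun h 0
  conv_lhs => rw [hS]
  rw [Set.ncard_union_eq hdisj, Set.ncard_image_of_injective _ (Fin.cons_right_injective _),
    Set.ncard_image_of_injective _ (Fin.cons_right_injective _)]

theorem Nat.sum_range_choose_succ (n d : ℕ) :
    ∑ i ∈ Finset.range (d + 2), (n + 1).choose i =
      ∑ i ∈ Finset.range (d + 2), n.choose i + ∑ i ∈ Finset.range (d + 1), n.choose i := by
  rw [Finset.sum_range_succ' _ (d + 1), Finset.sum_range_succ' (fun i => n.choose i) (d + 1)]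
  simp only [Nat.choose_succ_succ', Finset.sum_add_distrib, Nat.choose_zero_right]
  ring

namespace HyperplaneArrangement

variable {E : Type*} [NormedAddCommGroup E] [InnerProductSpace ℝ E] {ι : Type*}

def halfSpace (v : E) (c : ℝ) : Bool → Set E
  | true => {x | c < ⟪v, x⟫}
  | false => {x | ⟪v, x⟫ < c}

def cell (a : ι → E) (b : ι → ℝ) (σ : ι → Bool) : Set E :=
  ⋂ i, halfSpace (a i) (b i) (σ i)

noncomputable def side (a : ι → E) (b : ι → ℝ) (x : E) : ι → Bool :=
  fun i => decide (b i < ⟪a i, x⟫)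

def regions (a : ι → E) (b : ι → ℝ) : Set (ι → Bool) :=
  {σ | (cell a b σ).Nonempty}

theorem isOpen_halfSpace (v : E) (c : ℝ) : ∀ s, IsOpen (halfSpace v c s)
  | true => isOpen_lt continuous_const (continuous_const.inner continuous_id)
  | false => isOpen_lt (continuous_const.inner continuous_id) continuous_const

theorem convex_halfSpace (v : E) (c : ℝ) : ∀ s, Convex ℝ (halfSpace v c s)
  | true => convex_halfSpace_gt (innerₛₗ ℝ v).isLinear c
  | false => convex_halfSpace_lt (innerₛₗ ℝ v).isLinear c

theorem mem_halfSpace_iff {v x : E} {c : ℝ} {s : Bool} :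
    x ∈ halfSpace v c s ↔ ⟪v, x⟫ ≠ c ∧ decide (c < ⟪v, x⟫) = s := by
  cases s <;>
    simp only [halfSpace, Set.mem_ofPred_eq, decide_eq_true_iff, decide_eq_false_iff_not] <;>
    grind

theorem add_mem_halfSpace_iff {v x₀ y : E} {c : ℝ} {s : Bool} :
    x₀ + y ∈ halfSpace v c s ↔ y ∈ halfSpace v (c - ⟪v, x₀⟫) s := by
  cases s <;> simp [halfSpace, inner_add_right, sub_lt_iff_lt_add', lt_sub_iff_add_lt']

theorem coe_mem_halfSpace_iff (W : Submodule ℝ E) [W.HasOrthogonalProjection] {v : E} {c : ℝ}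
    {s : Bool} (y : W) :
    (y : E) ∈ halfSpace v c s ↔ y ∈ halfSpace (W.orthogonalProjectionOnto v) c s := by
  cases s <;> simp [halfSpace]

theorem isOpen_cell [Finite ι] (a : ι → E) (b : ι → ℝ) (σ : ι → Bool) : IsOpen (cell a b σ) :=
  isOpen_iInter_of_finite fun _ => isOpen_halfSpace _ _ _

theorem convex_cell (a : ι → E) (b : ι → ℝ) (σ : ι → Bool) : Convex ℝ (cell a b σ) :=
  convex_iInter fun _ => convex_halfSpace _ _ _

theorem mem_cell_iff {a : ι → E} {b : ι → ℝ} {σ : ι → Bool} {x : E} :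
    x ∈ cell a b σ ↔ (∀ i, ⟪a i, x⟫ ≠ b i) ∧ side a b x = σ := by
  simp only [cell, Set.mem_iInter, mem_halfSpace_iff, forall_and, side, funext_iff]

theorem regions_eq_image_side (a : ι → E) (b : ι → ℝ) :
    regions a b = side a b '' {x | ∀ i, ⟪a i, x⟫ ≠ b i} := by
  ext σ
  simp [regions, Set.Nonempty, mem_cell_iff]

theorem cell_cons {n : ℕ} (a : Fin (n + 1) → E) (b : Fin (n + 1) → ℝ) (s : Bool)
    (τ : Fin n → Bool) :
    cell a b (Fin.cons s τ) = cell (Fin.tail a) (Fin.tail b) τ ∩ halfSpace (a 0) (b 0) s := by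
  ext x
  simp [cell, Fin.forall_fin_succ, and_comm, Fin.tail]

theorem natCard_connectedComponents_eq_ncard_regions [Finite ι] (a : ι → E) (b : ι → ℝ) :
    Nat.card (ConnectedComponents {x | ∀ i, ⟪a i, x⟫ ≠ b i}) = (regions a b).ncard := by
  set U := {x : E | ∀ i, ⟪a i, x⟫ ≠ b i}
  have hfib (σ : ι → Bool) : (fun x : U => side a b x) ⁻¹' {σ} = Subtype.val ⁻¹' cell a b σ := by
    ext x
    simp only [Set.mem_preimage, Set.mem_singleton_iff, mem_cell_iff]
    exact (and_iff_right x.2).symm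
  have hcont : Continuous fun x : U => side a b x := continuous_discrete_rng.2 fun σ =>
    hfib σ ▸ (isOpen_cell a b σ).preimage continuous_subtype_val
  have hconn (σ : ι → Bool) : IsPreconnected ((fun x : U => side a b x) ⁻¹' {σ}) := by
    have hsub : cell a b σ ⊆ U := fun x hx => (mem_cell_iff.1 hx).1
    rw [hfib, ← Topology.IsInducing.subtypeVal.isPreconnected_image, Subtype.image_preimage_coe,
      Set.inter_eq_right.2 hsub]
    exact (convex_cell a b σ).isPreconnected
  rw [ConnectedComponents.natCard_eq_natCard_range hcont hconn, regions_eq_image_side,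
    Set.image_eq_range, Nat.card_coe_set_eq]

theorem exists_mem_inner_lt_of_isOpen {C : Set E} (hC : IsOpen C) {x : E} (hx : x ∈ C) {v : E}
    (hv : v ≠ 0) : ∃ y ∈ C, ⟪v, x⟫ < ⟪v, y⟫ := by
  have hnear : ∀ᶠ t : ℝ in 𝓝[>] 0, x + t • v ∈ C ∧ 0 < t := by
    refine (Filter.Eventually.filter_mono nhdsWithin_le_nhds ?_).and self_mem_nhdsWithin
    have hcont : Continuous fun t : ℝ => x + t • v := by fun_prop
    exact hcont.continuousAt.preimage_mem_nhds (by simpa using hC.mem_nhds hx)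
  obtain ⟨t, htC, ht⟩ := hnear.exists
  refine ⟨x + t • v, htC, ?_⟩
  rw [inner_add_right, real_inner_smul_right]
  nlinarith [real_inner_self_pos.2 hv]

theorem exists_inter_halfSpace_nonempty {C : Set E} (hC : IsOpen C) (hne : C.Nonempty) {v : E}
    (hv : v ≠ 0) (c : ℝ) : ∃ s, (C ∩ halfSpace v c s).Nonempty := by
  obtain ⟨x, hx⟩ := hne
  obtain ⟨y, hy, hxy⟩ := exists_mem_inner_lt_of_isOpen hC hx hv
  by_cases hyc : c < ⟪v, y⟫
  · exact ⟨true, y, hy, hyc⟩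
  · exact ⟨false, x, hx, show ⟪v, x⟫ < c by linarith [not_lt.1 hyc]⟩

theorem inter_halfSpace_nonempty_both_iff {C : Set E} (hCo : IsOpen C) (hCc : Convex ℝ C) {v : E}
    (hv : v ≠ 0) (c : ℝ) :
    (∀ s, (C ∩ halfSpace v c s).Nonempty) ↔ (C ∩ {x | ⟪v, x⟫ = c}).Nonempty := by
  constructor
  · intro h
    obtain ⟨x, hx, hxc : c < ⟪v, x⟫⟩ := h true
    obtain ⟨y, hy, hyc : ⟪v, y⟫ < c⟩ := h false
    obtain ⟨z, hz, hzc⟩ := hCc.isPreconnected.intermediate_value hy hx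
      (continuous_const.inner continuous_id).continuousOn ⟨hyc.le, hxc.le⟩
    exact ⟨z, hz, hzc⟩
  · rintro ⟨z, hz, rfl⟩ (_ | _)
    · obtain ⟨y, hy, hzy⟩ := exists_mem_inner_lt_of_isOpen hCo hz (neg_ne_zero.2 hv)
      refine ⟨y, hy, ?_⟩
      simp only [inner_neg_left] at hzy
      simpa [halfSpace] using neg_lt_neg_iff.1 hzy
    · obtain ⟨y, hy, hzy⟩ := exists_mem_inner_lt_of_isOpen hCo hz hv
      exact ⟨y, hy, hzy⟩

/- In the coordinates `x = x₀ + y`, `y ∈ W`, the hyperplane `⟪a i, x⟫ = b i` reads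
`⟪restrictNormal W a i, y⟫ = restrictOffset x₀ a b i`; for `W = (ℝ ∙ v)ᗮ` and `⟪v, x₀⟫ = c`
this is the arrangement induced on the hyperplane `⟪v, x⟫ = c`. -/
noncomputable def restrictNormal (W : Submodule ℝ E) [W.HasOrthogonalProjection] (a : ι → E)
    (i : ι) : W :=
  W.orthogonalProjectionOnto (a i)

def restrictOffset (x₀ : E) (a : ι → E) (b : ι → ℝ) (i : ι) : ℝ :=
  b i - ⟪a i, x₀⟫

theorem inner_add_eq_iff (W : Submodule ℝ E) [W.HasOrthogonalProjection] {a : ι → E}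
    {b : ι → ℝ} (x₀ : E) (y : W) (i : ι) :
    ⟪a i, x₀ + y⟫ = b i ↔ ⟪restrictNormal W a i, y⟫ = restrictOffset x₀ a b i := by
  simp [restrictNormal, restrictOffset, inner_add_right, eq_sub_iff_add_eq']

theorem add_mem_cell_iff (W : Submodule ℝ E) [W.HasOrthogonalProjection] {a : ι → E}
    {b : ι → ℝ} {σ : ι → Bool} (x₀ : E) (y : W) :
    x₀ + ↑y ∈ cell a b σ ↔ y ∈ cell (restrictNormal W a) (restrictOffset x₀ a b) σ := by
  simp only [cell, Set.mem_iInter, add_mem_halfSpace_iff, coe_mem_halfSpace_iff W,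
    restrictNormal, restrictOffset]

theorem exists_inner_eq_and_iff {v x₀ : E} {c : ℝ} (hx₀ : ⟪v, x₀⟫ = c) {p : E → Prop} :
    (∃ x, ⟪v, x⟫ = c ∧ p x) ↔ ∃ y : (ℝ ∙ v)ᗮ, p (x₀ + y) := by
  constructor
  · rintro ⟨x, hxc, hx⟩
    have hW : x - x₀ ∈ (ℝ ∙ v)ᗮ := Submodule.mem_orthogonal_singleton_iff_inner_right.2 <| by
      rw [inner_sub_right, hxc, hx₀, sub_self]
    exact ⟨⟨x - x₀, hW⟩, by simpa using hx⟩
  · rintro ⟨y, hy⟩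
    refine ⟨x₀ + y, ?_, hy⟩
    rw [inner_add_right, hx₀, Submodule.mem_orthogonal_singleton_iff_inner_right.1 y.2, add_zero]

theorem inter_hyperplane_nonempty_iff {a : ι → E} {b : ι → ℝ} {σ : ι → Bool} {v x₀ : E}
    {c : ℝ} (hx₀ : ⟪v, x₀⟫ = c) :
    (cell a b σ ∩ {x | ⟪v, x⟫ = c}).Nonempty ↔
      σ ∈ regions (restrictNormal (ℝ ∙ v)ᗮ a) (restrictOffset x₀ a b) := by
  simp only [Set.Nonempty, Set.mem_inter_iff, Set.mem_ofPred_eq, and_comm (a := _ ∈ cell a b σ)]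
  rw [exists_inner_eq_and_iff hx₀]
  simp only [add_mem_cell_iff]
  rfl

theorem ncard_regions_eq_tail_add_restrict {n : ℕ} {a : Fin (n + 1) → E} {b : Fin (n + 1) → ℝ}
    (ha : a 0 ≠ 0) {x₀ : E} (hx₀ : ⟪a 0, x₀⟫ = b 0) :
    (regions a b).ncard = (regions (Fin.tail a) (Fin.tail b)).ncard +
      (regions (restrictNormal (ℝ ∙ a 0)ᗮ (Fin.tail a))
        (restrictOffset x₀ (Fin.tail a) (Fin.tail b))).ncard := by
  have hunion : {τ | Fin.cons true τ ∈ regions a b} ∪ {τ | Fin.cons false τ ∈ regions a b} =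
      regions (Fin.tail a) (Fin.tail b) := by
    ext τ
    simp only [regions, cell_cons, Set.mem_union, Set.mem_ofPred_eq]
    constructor
    · rintro (⟨x, hx, -⟩ | ⟨x, hx, -⟩) <;> exact ⟨x, hx⟩
    · intro h
      obtain ⟨_ | _, hs⟩ := exists_inter_halfSpace_nonempty (isOpen_cell _ _ τ) h ha (b 0)
      exacts [.inr hs, .inl hs]
  have hinter : {τ | Fin.cons true τ ∈ regions a b} ∩ {τ | Fin.cons false τ ∈ regions a b} =
      regions (restrictNormal (ℝ ∙ a 0)ᗮ (Fin.tail a))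
        (restrictOffset x₀ (Fin.tail a) (Fin.tail b)) := by
    ext τ
    rw [← inter_hyperplane_nonempty_iff hx₀, ← inter_halfSpace_nonempty_both_iff
      (isOpen_cell _ _ τ) (convex_cell _ _ τ) ha, Bool.forall_bool]
    simp only [regions, cell_cons, Set.mem_inter_iff, Set.mem_ofPred_eq, and_comm]
  rw [Set.ncard_eq_ncard_cons_true_add_ncard_cons_false, ← Set.ncard_union_add_ncard_inter,
    hunion, hinter]

theorem linearIndepOn_restrictNormal {v : E} {a : ι → E} {s : Set ι}
    (ha : LinearIndepOn ℝ a s) (hv : v ∉ Submodule.span ℝ (a '' s)) :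
    LinearIndepOn ℝ (restrictNormal (ℝ ∙ v)ᗮ a) s := by
  have hker : LinearMap.ker ((ℝ ∙ v)ᗮ.orthogonalProjectionOnto : E →ₗ[ℝ] (ℝ ∙ v)ᗮ) = ℝ ∙ v := by
    have := Submodule.ker_orthogonalProjectionOnto (K := (ℝ ∙ v)ᗮ)
    rwa [Submodule.orthogonal_orthogonal] at this
  refine ha.map (f := ((ℝ ∙ v)ᗮ.orthogonalProjectionOnto : E →ₗ[ℝ] (ℝ ∙ v)ᗮ)) ?_
  rw [hker, Submodule.disjoint_span_singleton]
  exact fun hmem => (hv (by rwa [Set.image_eq_range])).elim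

open Module

structure InGeneralPosition (a : ι → E) (b : ι → ℝ) : Prop where
  linearIndepOn : ∀ s : Finset ι, s.card ≤ finrank ℝ E → LinearIndepOn ℝ a s
  exists_common_point : ∀ s : Finset ι, s.card ≤ finrank ℝ E → ∃ x, ∀ i ∈ s, ⟪a i, x⟫ = b i
  not_exists_common_point :
    ∀ s : Finset ι, s.card = finrank ℝ E + 1 → ¬∃ x, ∀ i ∈ s, ⟪a i, x⟫ = b i

theorem _root_.GeneralPosition.inGeneralPosition {d n : ℕ}
    {a : Fin n → EuclideanSpace ℝ (Fin d)} {b : Fin n → ℝ} (h : GeneralPosition a b) :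
    InGeneralPosition a b where
  linearIndepOn s hs := (h.1 s (by simpa using hs)).1
  exists_common_point s hs := (h.1 s (by simpa using hs)).2
  not_exists_common_point s hs := h.2 s (by simpa using hs)

namespace InGeneralPosition

theorem comp_embedding {κ : Type*} {a : ι → E} {b : ι → ℝ} (h : InGeneralPosition a b)
    (e : κ ↪ ι) : InGeneralPosition (a ∘ e) (b ∘ e) where
  linearIndepOn s hs := by
    have := h.linearIndepOn (s.map e) (by simpa using hs)
    rw [Finset.coe_map] at this
    exact this.comp_of_image e.injective.injOn
  exists_common_point s hs := by
    obtain ⟨x, hx⟩ := h.exists_common_point (s.map e) (by simpa using hs)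
    exact ⟨x, fun i hi => hx (e i) (Finset.mem_map_of_mem e hi)⟩
  not_exists_common_point s hs := by
    rintro ⟨x, hx⟩
    exact h.not_exists_common_point (s.map e) (by simpa using hs) ⟨x, by simpa using hx⟩

section Cons

variable {n : ℕ} {a : Fin (n + 1) → E} {b : Fin (n + 1) → ℝ}

theorem tail (h : InGeneralPosition a b) : InGeneralPosition (Fin.tail a) (Fin.tail b) :=
  h.comp_embedding (Fin.succEmb n)

theorem restrict [FiniteDimensional ℝ E] (h : InGeneralPosition a b) (ha : a 0 ≠ 0) {x₀ : E}
    (hx₀ : ⟪a 0, x₀⟫ = b 0) :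
    InGeneralPosition (restrictNormal (ℝ ∙ a 0)ᗮ (Fin.tail a))
      (restrictOffset x₀ (Fin.tail a) (Fin.tail b)) := by
  have hW : finrank ℝ (ℝ ∙ a 0)ᗮ + 1 = finrank ℝ E := by
    rw [← Submodule.finrank_add_finrank_orthogonal (ℝ ∙ a 0), finrank_span_singleton ha, add_comm]
  let lift (s' : Finset (Fin n)) : Finset (Fin (n + 1)) :=
    Finset.cons 0 (s'.map (Fin.succEmb n)) (by simp)
  have hcard (s' : Finset (Fin n)) : (lift s').card = s'.card + 1 := by simp [lift]
  have hcommon (s' : Finset (Fin n)) : (∃ x, ∀ i ∈ lift s', ⟪a i, x⟫ = b i) ↔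
      ∃ y : (ℝ ∙ a 0)ᗮ, ∀ i ∈ s', ⟪restrictNormal (ℝ ∙ a 0)ᗮ (Fin.tail a) i, y⟫ =
        restrictOffset x₀ (Fin.tail a) (Fin.tail b) i := by
    simp only [lift, Finset.forall_mem_cons, Finset.forall_mem_map, Fin.coe_succEmb,
      exists_inner_eq_and_iff hx₀, ← inner_add_eq_iff]
    rfl
  refine ⟨fun s' hs' => ?_, fun s' hs' => ?_, fun s' hs' => ?_⟩
  · have hli := h.linearIndepOn (lift s') (by rw [hcard]; omega)
    simp only [lift, Finset.coe_cons, Finset.coe_map, Fin.coe_succEmb] at hli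
    obtain ⟨hli, hspan⟩ := (linearIndepOn_insert (by simp)).1 hli
    exact linearIndepOn_restrictNormal (hli.comp_of_image (Fin.succ_injective _).injOn)
      (by rwa [Set.image_image] at hspan)
  · exact (hcommon s').1 (h.exists_common_point (lift s') (by rw [hcard]; omega))
  · exact fun hy => h.not_exists_common_point (lift s') (by rw [hcard]; omega) ((hcommon s').2 hy)

end Cons

theorem ncard_regions_of_finrank_eq_zero [FiniteDimensional ℝ E] {a : ι → E} {b : ι → ℝ}
    (h : InGeneralPosition a b) (hE : finrank ℝ E = 0) : (regions a b).ncard = 1 := by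
  have : Subsingleton E := Module.finrank_zero_iff.1 hE
  have hb (i : ι) : ⟪a i, 0⟫ ≠ b i := fun hi =>
    h.not_exists_common_point {i} (by simp [hE]) ⟨0, by simpa using hi⟩
  have hU : {x : E | ∀ i, ⟪a i, x⟫ ≠ b i} = {0} :=
    Set.eq_singleton_iff_unique_mem.2 ⟨hb, fun x _ => Subsingleton.elim x 0⟩
  rw [regions_eq_image_side, hU, Set.image_singleton, Set.ncard_singleton]

theorem ncard_regions [FiniteDimensional ℝ E] {n : ℕ} {a : Fin n → E} {b : Fin n → ℝ}
    (h : InGeneralPosition a b) :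
    (regions a b).ncard = ∑ i ∈ Finset.range (finrank ℝ E + 1), n.choose i := by
  induction n generalizing E with
  | zero =>
    have : regions a b = Set.univ := Set.eq_univ_of_forall fun σ => ⟨0, by simp [cell]⟩
    simp [this, Finset.sum_range_succ']
  | succ n ih =>
    cases hd : finrank ℝ E with
    | zero => simp [h.ncard_regions_of_finrank_eq_zero hd]
    | succ d =>
      have ha : a 0 ≠ 0 := (h.linearIndepOn {0} (by simp [hd])).ne_zero (by simp)
      obtain ⟨x₀, hx₀⟩ : ∃ x₀, ⟪a 0, x₀⟫ = b 0 := by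
        simpa using h.exists_common_point {0} (by simp [hd])
      have : Fact (finrank ℝ E = d + 1) := ⟨hd⟩
      rw [ncard_regions_eq_tail_add_restrict ha hx₀, ih h.tail, ih (h.restrict ha hx₀),
        Submodule.finrank_orthogonal_span_singleton (n := d) ha, hd, Nat.sum_range_choose_succ]

end InGeneralPosition

end HyperplaneArrangement

theorem count_regions_of_hyperplane_arrangement_general {d n : ℕ}
    (a : Fin n → EuclideanSpace ℝ (Fin d)) (b : Fin n → ℝ)
    (hgen : GeneralPosition a b) :
    Nat.card (ConnectedComponents {x : EuclideanSpace ℝ (Fin d) | ∀ i, ⟪a i, x⟫ ≠ b i}) =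
      ∑ i ∈ Finset.range (d + 1), n.choose i := by
  rw [HyperplaneArrangement.natCard_connectedComponents_eq_ncard_regions,
    hgen.inGeneralPosition.ncard_regions, finrank_euclideanSpace_fin]

theorem count_regions_of_hyperplane_arrangement {d n : ℕ}
    (a : Fin n → EuclideanSpace ℝ (Fin d)) (b : Fin n → ℝ) (ha : ∀ i, a i ≠ 0)
    (hgen : GeneralPosition a b) :
    Nat.card (ConnectedComponents {x : EuclideanSpace ℝ (Fin d) | ∀ i, ⟪a i, x⟫ ≠ b i}) =
      ∑ i ∈ Finset.range (d + 1), n.choose i :=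
  count_regions_of_hyperplane_arrangement_general a b hgen
end

section
/- Let N be an ε-net of the unit sphere S^{d−1} in ℝ^d with ε ≤ 3/4 and d ≥ 2. Then |N| ≥ √(2π(d−1)/d) · ε^{1−d}. -/
/-!
The ε-net gives a covering of the unit ball `B^d` by the spherical sectors (cones over caps)
`{x ∈ B^d : (1 - ε²/2)‖x‖ ≤ ⟪x, y⟫}`, `y ∈ N`. Slicing perpendicular to `y`, a sector lies in a
cone of height `1 - ε²/2` and slope `ε / (1 - ε²/2)` together with a cap whose slice at height `t`
has squared radius at most `2(1 - t)`; this bounds its volume by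
`ε^(d-1) (1/d + ε²/(d+1)) ω_{d-1}`, where `ω_n` is the volume of the unit `n`-ball. Comparing
with `ω_d` and using `Γ(x + 1/2) ≤ √x Γ(x)` (log-convexity of `Γ`) to bound `ω_d / ω_{d-1}` from
below by `√(2π/(d+1))` gives the estimate; `ε ≤ 3/4` keeps the cap term `ε²/(d+1)` small enough.
-/

open scoped Real RealInnerProductSpace
open Real MeasureTheory Metric Set

lemma Real.Gamma_add_half_le_sqrt_mul_Gamma {x : ℝ} (hx : 0 < x) :
    Gamma (x + 1 / 2) ≤ √x * Gamma x := by
  have hΓ : 0 ≤ Gamma x := (Gamma_pos_of_pos hx).le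
  have := Gamma_mul_add_mul_le_rpow_Gamma_mul_rpow_Gamma hx (by linarith : 0 < x + 1)
    one_half_pos one_half_pos (by norm_num)
  rw [Gamma_add_one hx.ne', ← sqrt_eq_rpow, ← sqrt_eq_rpow, sqrt_mul hx.le,
    mul_left_comm, mul_self_sqrt hΓ] at this
  convert this using 2
  ring

noncomputable def ballVolume (n : ℕ) : ℝ := √π ^ n / Gamma (n / 2 + 1)

lemma ballVolume_pos (n : ℕ) : 0 < ballVolume n := by
  unfold ballVolume
  have := Gamma_pos_of_pos (by positivity : (0 : ℝ) < n / 2 + 1)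
  positivity

lemma sqrt_two_pi_div_mul_ballVolume_le (n : ℕ) :
    √(2 * π / (n + 2)) * ballVolume n ≤ ballVolume (n + 1) := by
  have hx : (0 : ℝ) < n / 2 + 1 := by positivity
  have hΓ := Gamma_pos_of_pos hx
  have hstep := Gamma_add_half_le_sqrt_mul_Gamma hx
  have hsqrt : √(2 * π / (n + 2)) = √π / √(n / 2 + 1) := by
    rw [← sqrt_div' _ hx.le]; congr 1; field_simp
  unfold ballVolume
  rw [hsqrt, pow_succ, div_mul_div_comm, mul_comm (√π ^ n)]
  push_cast
  rw [show ((n : ℝ) + 1) / 2 + 1 = n / 2 + 1 + 1 / 2 by ring]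
  gcongr

lemma sqrt_two_pi_mul_div_mul_le (n : ℕ) {δ : ℝ} (hδ : δ ≤ 9 / 16) :
    √(2 * π * n / (n + 1)) * (1 / (n + 1) + δ / (n + 2)) ≤ √(2 * π / (n + 2)) := by
  have hpoly : (n : ℝ) * (n + 2 + 9 / 16 * (n + 1)) ^ 2 ≤ (n + 1) ^ 3 * (n + 2) := by
    have : (0 : ℝ) ≤ n := n.cast_nonneg
    nlinarith [pow_nonneg this 3, pow_nonneg this 4]
  calc √(2 * π * n / (n + 1)) * (1 / (n + 1) + δ / (n + 2))
      ≤ √(2 * π * n / (n + 1)) * (1 / (n + 1) + 9 / 16 / (n + 2)) := by gcongr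
    _ = √(2 * π * n / (n + 1) * (1 / (n + 1) + 9 / 16 / (n + 2)) ^ 2) := by
      rw [sqrt_mul (by positivity), sqrt_sq (by positivity)]
    _ ≤ √(2 * π / (n + 2)) := by
      gcongr
      rw [div_add_div _ _ (by positivity) (by positivity), div_pow, div_mul_div_comm,
        div_le_div_iff₀ (by positivity) (by positivity)]
      have := mul_le_mul_of_nonneg_left hpoly (by positivity : (0 : ℝ) ≤ 2 * π * (n + 2))
      linarith

lemma volume_closedBall_euclideanSpace {n : ℕ} (hn : 0 < n) (x : EuclideanSpace ℝ (Fin n))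
    {r : ℝ} (hr : 0 ≤ r) : volume (closedBall x r) = ENNReal.ofReal (r ^ n * ballVolume n) := by
  have : Nonempty (Fin n) := Fin.pos_iff_nonempty.mp hn
  rw [EuclideanSpace.volume_closedBall, ENNReal.ofReal_mul (by positivity), ENNReal.ofReal_pow hr]
  simp [ballVolume]

lemma volume_setOf_sum_sq_le {n : ℕ} (hn : 0 < n) {r : ℝ} (hr : 0 ≤ r) :
    volume {z : Fin n → ℝ | ∑ i, z i ^ 2 ≤ r ^ 2} = ENNReal.ofReal (r ^ n * ballVolume n) := by
  rw [← volume_closedBall_euclideanSpace hn 0 hr,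
    ← (PiLp.volume_preserving_ofLp (Fin n)).measure_preimage_equiv
      (f := (MeasurableEquiv.toLp 2 (Fin n → ℝ)).symm)]
  congr 1
  ext z
  simp [EuclideanSpace.norm_eq, sqrt_le_left, hr]

def solidOfRevolution (n : ℕ) (a b : ℝ) (f : ℝ → ℝ) : Set (ℝ × (Fin n → ℝ)) :=
  {p | p.1 ∈ Icc a b ∧ ∑ j, p.2 j ^ 2 ≤ f p.1 ^ 2}

lemma volume_solidOfRevolution {n : ℕ} (hn : 0 < n) {a b : ℝ} (hab : a ≤ b) {f : ℝ → ℝ}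
    (hf : Continuous f) (hf0 : ∀ t ∈ Icc a b, 0 ≤ f t) :
    volume (solidOfRevolution n a b f) =
      ENNReal.ofReal ((∫ t in a..b, f t ^ n) * ballVolume n) := by
  have hmeas : MeasurableSet (solidOfRevolution n a b f) :=
    (measurableSet_Icc.preimage measurable_fst).inter <|
      measurableSet_le (f := fun p : ℝ × (Fin n → ℝ) ↦ ∑ j, p.2 j ^ 2) (by fun_prop)
        ((hf.measurable.comp measurable_fst).pow_const 2)
  have hslice (t : ℝ) : volume (Prod.mk t ⁻¹' solidOfRevolution n a b f) =
      (Icc a b).indicator (fun t ↦ ENNReal.ofReal (f t ^ n * ballVolume n)) t := by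
    by_cases ht : t ∈ Icc a b
    · simp only [solidOfRevolution, preimage_ofPred_eq, ht, true_and, indicator_of_mem]
      exact volume_setOf_sum_sq_le hn (hf0 t ht)
    · have : Prod.mk t ⁻¹' solidOfRevolution n a b f = ∅ := by
        ext z; simp only [solidOfRevolution, mem_preimage, mem_ofPred_eq, ht, false_and,
          mem_empty_iff_false]
      simp [this, ht]
  rw [Measure.volume_eq_prod, Measure.prod_apply hmeas]
  simp_rw [hslice]
  rw [lintegral_indicator measurableSet_Icc, ← ofReal_integral_eq_lintegral_ofReal
    (by fun_prop : Continuous fun t ↦ f t ^ n * ballVolume n).integrableOn_Icc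
    ((ae_restrict_iff' measurableSet_Icc).2 (ae_of_all _ fun t ht ↦
      mul_nonneg (pow_nonneg (hf0 t ht) n) (ballVolume_pos n).le)),
    integral_Icc_eq_integral_Ioc, ← intervalIntegral.integral_of_le hab,
    intervalIntegral.integral_mul_const]

lemma integral_mul_div_pow {c : ℝ} (hc : c ≠ 0) (ε : ℝ) (n : ℕ) :
    ∫ t in (0 : ℝ)..c, (ε * t / c) ^ n = ε ^ n * c / (n + 1) := by
  simp_rw [div_pow, mul_pow, div_eq_mul_inv, mul_right_comm _ _ ((c ^ n)⁻¹)]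
  rw [intervalIntegral.integral_const_mul, integral_pow]
  field_simp
  ring

lemma integral_sqrt_two_mul_one_sub_pow {ε : ℝ} (hε : 0 ≤ ε) (n : ℕ) :
    ∫ t in (1 - ε ^ 2 / 2)..1, √(2 * (1 - t)) ^ n = ε ^ (n + 2) / (n + 2) := by
  have hderiv : ∀ w ∈ uIcc ε 0, HasDerivAt (fun w : ℝ ↦ 1 - w ^ 2 / 2) (-w) w := fun w _ ↦ by
    simpa using ((hasDerivAt_pow 2 w).div_const 2).const_sub 1
  have hsubst := intervalIntegral.integral_comp_mul_deriv hderiv continuousOn_neg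
    (g := fun t ↦ √(2 * (1 - t)) ^ n) (by fun_prop)
  simp only [Function.comp_def, ne_eq, OfNat.ofNat_ne_zero, not_false_eq_true, zero_pow,
    zero_div, sub_zero] at hsubst
  rw [← hsubst, intervalIntegral.integral_symm, ← intervalIntegral.integral_neg]
  have hpow : EqOn (fun w : ℝ ↦ -(√(2 * (1 - (1 - w ^ 2 / 2))) ^ n * -w)) (fun w ↦ w ^ (n + 1))
      (uIcc 0 ε) := fun w hw ↦ by
    rw [uIcc_of_le hε] at hw
    simp only [show 2 * (1 - (1 - w ^ 2 / 2)) = w ^ 2 by ring, sqrt_sq hw.1]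
    ring
  rw [intervalIntegral.integral_congr hpow, integral_pow]
  push_cast
  ring_nf

section Sector

variable {E : Type*} [NormedAddCommGroup E] [InnerProductSpace ℝ E]

def sphericalSector (y : E) (c : ℝ) : Set E := {x | ‖x‖ ≤ 1 ∧ c * ‖x‖ ≤ ⟪x, y⟫}

lemma smul_mem_sphericalSector {u y : E} {ε r : ℝ} (hu : ‖u‖ = 1) (hy : ‖y‖ = 1)
    (huy : dist u y ≤ ε) (hr0 : 0 ≤ r) (hr1 : r ≤ 1) :
    r • u ∈ sphericalSector y (1 - ε ^ 2 / 2) := by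
  have hdist : ‖u - y‖ ^ 2 ≤ ε ^ 2 := by
    rw [← dist_eq_norm]; exact pow_le_pow_left₀ dist_nonneg huy 2
  have hinner : 1 - ε ^ 2 / 2 ≤ ⟪u, y⟫ := by
    rw [norm_sub_sq_real, hu, hy] at hdist; linarith
  refine ⟨?_, ?_⟩
  · rwa [norm_smul, hu, mul_one, norm_of_nonneg hr0]
  · rw [norm_smul, hu, mul_one, norm_of_nonneg hr0, real_inner_smul_left]
    nlinarith

lemma closedBall_subset_biUnion_sphericalSector [Nontrivial E] {ε : ℝ} {s : Set E}
    (hs : s ⊆ sphere 0 1) (hnet : ∀ x ∈ sphere (0 : E) 1, ∃ y ∈ s, dist x y ≤ ε) :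
    closedBall (0 : E) 1 ⊆ ⋃ y ∈ s, sphericalSector y (1 - ε ^ 2 / 2) := by
  intro x hx
  rw [mem_closedBall_zero_iff] at hx
  obtain ⟨u, hu, hxu⟩ : ∃ u : E, ‖u‖ = 1 ∧ ‖x‖ • u = x := by
    by_cases hx0 : x = 0
    · obtain ⟨u, hu⟩ := exists_norm_eq E zero_le_one
      exact ⟨u, hu, by simp [hx0]⟩
    · exact ⟨‖x‖⁻¹ • x, norm_smul_inv_norm hx0, smul_inv_smul₀ (norm_ne_zero_iff.2 hx0) x⟩
  obtain ⟨y, hys, huy⟩ := hnet u (mem_sphere_zero_iff_norm.2 hu)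
  rw [← hxu]
  exact Set.mem_biUnion hys <|
    smul_mem_sphericalSector hu (mem_sphere_zero_iff_norm.1 (hs hys)) huy (norm_nonneg _) hx

lemma volume_sphericalSector_eq_of_norm_eq [FiniteDimensional ℝ E] [MeasurableSpace E]
    [BorelSpace E] {y y' : E} (h : ‖y‖ = ‖y'‖) (c : ℝ) :
    volume (sphericalSector y c) = volume (sphericalSector y' c) := by
  set f := Submodule.reflection (ℝ ∙ (y - y'))ᗮ
  have hf : f y = y' := Submodule.reflection_sub h
  rw [← f.measurePreserving.measure_preimage_equiv (f := f.toMeasurableEquiv)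
    (sphericalSector y' c)]
  congr 1
  ext x
  simp [sphericalSector, ← hf]

end Sector

lemma mem_Icc_and_le_sq_or_mem_Icc_and_le_sq {ε r t s : ℝ} (hε : ε ^ 2 < 2) (hs : 0 ≤ s)
    (hr : r ^ 2 = t ^ 2 + s) (hr0 : 0 ≤ r) (hr1 : r ≤ 1) (hrt : (1 - ε ^ 2 / 2) * r ≤ t) :
    (t ∈ Icc 0 (1 - ε ^ 2 / 2) ∧ s ≤ (ε * t / (1 - ε ^ 2 / 2)) ^ 2) ∨
      (t ∈ Icc (1 - ε ^ 2 / 2) 1 ∧ s ≤ √(2 * (1 - t)) ^ 2) := by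
  have hc : 0 < 1 - ε ^ 2 / 2 := by linarith
  have hc2 : 1 - (1 - ε ^ 2 / 2) ^ 2 ≤ ε ^ 2 := by nlinarith [sq_nonneg (ε ^ 2)]
  set c := 1 - ε ^ 2 / 2
  have ht0 : 0 ≤ t := (mul_nonneg hc.le hr0).trans hrt
  have ht1 : t ≤ 1 := by nlinarith
  rcases le_total t c with htc | htc
  · refine Or.inl ⟨⟨ht0, htc⟩, ?_⟩
    have hcr : c ^ 2 * (t ^ 2 + s) ≤ t ^ 2 := by
      rw [← hr, ← mul_pow]; exact pow_le_pow_left₀ (mul_nonneg hc.le hr0) hrt 2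
    have : (1 - c ^ 2) * t ^ 2 ≤ ε ^ 2 * t ^ 2 := by gcongr
    rw [div_pow, le_div_iff₀ (by positivity)]
    nlinarith
  · refine Or.inr ⟨⟨htc, ht1⟩, ?_⟩
    rw [sq_sqrt (by linarith)]
    nlinarith [sq_nonneg (1 - t)]

lemma volume_sphericalSector_le {n : ℕ} (hn : 0 < n) {ε : ℝ} (hε0 : 0 ≤ ε) (hε : ε ^ 2 < 2)
    {y : EuclideanSpace ℝ (Fin (n + 1))} (hy : ‖y‖ = 1) :
    volume (sphericalSector y (1 - ε ^ 2 / 2)) ≤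
      ENNReal.ofReal (ε ^ n * (1 / (n + 1) + ε ^ 2 / (n + 2)) * ballVolume n) := by
  have hc : 0 < 1 - ε ^ 2 / 2 := by linarith
  have hc1 : 1 - ε ^ 2 / 2 ≤ 1 := by linarith [sq_nonneg ε]
  have hV := ballVolume_pos n
  set c := 1 - ε ^ 2 / 2
  let e : EuclideanSpace ℝ (Fin (n + 1)) := EuclideanSpace.single 0 1
  rw [volume_sphericalSector_eq_of_norm_eq (y' := e) (by simp [e, hy])]
  let Φ : EuclideanSpace ℝ (Fin (n + 1)) → ℝ × (Fin n → ℝ) := fun x ↦ (x 0, fun j ↦ x j.succ)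
  have hΦ : MeasurePreserving Φ :=
    (volume_preserving_piFinSuccAbove (fun _ ↦ ℝ) 0).comp (PiLp.volume_preserving_ofLp _)
  let cone := solidOfRevolution n 0 c fun t ↦ ε * t / c
  let cap := solidOfRevolution n c 1 fun t ↦ √(2 * (1 - t))
  have hsub : sphericalSector e c ⊆ Φ ⁻¹' (cone ∪ cap) := by
    rintro x ⟨hx1, hxe⟩
    have hnorm : ‖x‖ ^ 2 = x 0 ^ 2 + ∑ j : Fin n, x j.succ ^ 2 := by
      rw [EuclideanSpace.norm_sq_eq, Fin.sum_univ_succ]; simp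
    rw [EuclideanSpace.inner_single_right] at hxe
    exact mem_Icc_and_le_sq_or_mem_Icc_and_le_sq hε (by positivity) hnorm
      (norm_nonneg x) hx1 (by simpa using hxe)
  have hcone : volume cone = ENNReal.ofReal (ε ^ n * c / (n + 1) * ballVolume n) := by
    rw [volume_solidOfRevolution hn hc.le (by fun_prop) fun t ht ↦
      div_nonneg (mul_nonneg hε0 ht.1) hc.le, integral_mul_div_pow hc.ne']
  have hcap : volume cap = ENNReal.ofReal (ε ^ (n + 2) / (n + 2) * ballVolume n) := by
    rw [volume_solidOfRevolution hn hc1 (by fun_prop) fun t _ ↦ sqrt_nonneg _,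
      integral_sqrt_two_mul_one_sub_pow hε0]
  calc volume (sphericalSector e c)
      ≤ volume (cone ∪ cap) := (measure_mono hsub).trans (hΦ.measure_preimage_le _)
    _ ≤ volume cone + volume cap := measure_union_le _ _
    _ ≤ _ := by
      rw [hcone, hcap, ← ENNReal.ofReal_add (by positivity) (by positivity), ← add_mul]
      refine ENNReal.ofReal_le_ofReal ?_
      gcongr
      calc ε ^ n * c / (n + 1) + ε ^ (n + 2) / (n + 2)
          ≤ ε ^ n * 1 / (n + 1) + ε ^ (n + 2) / (n + 2) := by gcongr
        _ = ε ^ n * (1 / (n + 1) + ε ^ 2 / (n + 2)) := by ring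

lemma ballVolume_succ_le_card_mul {n : ℕ} (hn : 0 < n) {ε : ℝ} (hε0 : 0 ≤ ε) (hε : ε ^ 2 < 2)
    (N : Finset (EuclideanSpace ℝ (Fin (n + 1))))
    (hN : (N : Set (EuclideanSpace ℝ (Fin (n + 1)))) ⊆ sphere 0 1)
    (hnet : ∀ x ∈ sphere (0 : EuclideanSpace ℝ (Fin (n + 1))) 1, ∃ y ∈ N, dist x y ≤ ε) :
    ballVolume (n + 1) ≤ N.card * (ε ^ n * (1 / (n + 1) + ε ^ 2 / (n + 2)) * ballVolume n) := by
  have hq : 0 ≤ ε ^ n * (1 / (n + 1) + ε ^ 2 / (n + 2)) * ballVolume n :=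
    mul_nonneg (by positivity) (ballVolume_pos n).le
  have hcover := closedBall_subset_biUnion_sphericalSector hN (by simpa using hnet)
  rw [← ENNReal.ofReal_le_ofReal_iff (by positivity), ENNReal.ofReal_mul (by positivity),
    ENNReal.ofReal_natCast]
  calc ENNReal.ofReal (ballVolume (n + 1))
      = volume (closedBall (0 : EuclideanSpace ℝ (Fin (n + 1))) 1) := by
        rw [volume_closedBall_euclideanSpace n.succ_pos 0 zero_le_one, one_pow, one_mul]
    _ ≤ volume (⋃ y ∈ N, sphericalSector y (1 - ε ^ 2 / 2)) :=
        measure_mono (by simpa using hcover)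
    _ ≤ ∑ y ∈ N, volume (sphericalSector y (1 - ε ^ 2 / 2)) := measure_biUnion_finset_le _ _
    _ ≤ ∑ _y ∈ N, ENNReal.ofReal (ε ^ n * (1 / (n + 1) + ε ^ 2 / (n + 2)) * ballVolume n) :=
        Finset.sum_le_sum fun y hy ↦
          volume_sphericalSector_le hn hε0 hε (mem_sphere_zero_iff_norm.1 (hN hy))
    _ = _ := by rw [Finset.sum_const, nsmul_eq_mul]

theorem epsilon_net_card_lower_bound {d : ℕ} (hd : 2 ≤ d) (ε : ℝ) (hε0 : 0 < ε)
    (hε : ε ≤ 3 / 4) (N : Finset (EuclideanSpace ℝ (Fin d)))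
    (hN : ↑N ⊆ Metric.sphere (0 : EuclideanSpace ℝ (Fin d)) 1)
    (hnet : ∀ x ∈ Metric.sphere (0 : EuclideanSpace ℝ (Fin d)) 1, ∃ y ∈ N, dist x y ≤ ε) :
    Real.sqrt (2 * π * (d - 1) / d) * ε ^ ((1 : ℝ) - d) ≤ N.card := by
  obtain ⟨n, rfl⟩ : ∃ n, d = n + 1 := ⟨d - 1, by omega⟩
  have hε2 : ε ^ 2 ≤ 9 / 16 := by nlinarith
  set q := ε ^ n * (1 / (n + 1) + ε ^ 2 / (n + 2)) * ballVolume n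
  have hq : 0 < q := mul_pos (by positivity) (ballVolume_pos n)
  have hcard := ballVolume_succ_le_card_mul (by omega) hε0.le (by linarith) N hN hnet
  have hbound : √(2 * π * n / (n + 1)) * (ε ^ n)⁻¹ * q ≤ N.card * q :=
    calc √(2 * π * n / (n + 1)) * (ε ^ n)⁻¹ * q
        = √(2 * π * n / (n + 1)) * (1 / (n + 1) + ε ^ 2 / (n + 2)) * ballVolume n := by
          simp only [q]; field_simp
      _ ≤ √(2 * π / (n + 2)) * ballVolume n :=
          mul_le_mul_of_nonneg_right (sqrt_two_pi_mul_div_mul_le n hε2) (ballVolume_pos n).le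
      _ ≤ ballVolume (n + 1) := sqrt_two_pi_div_mul_ballVolume_le n
      _ ≤ N.card * q := hcard
  rw [show (1 : ℝ) - ↑(n + 1) = -n by push_cast; ring, rpow_neg hε0.le, rpow_natCast]
  push_cast
  rw [add_sub_cancel_right]
  exact le_of_mul_le_mul_right hbound hq
end

section
/- Under the hypotheses of the Tverberg-type construction (odd d ≥ 3, full-spark A = [A₁,…,Aₙ], [A_i,A_j,b_i−b_j] full rank for i ≠ j), any affine hyperplane H = {x : ⟨a,x⟩ = β} that is disjoint from both S_i and S_j (i ≠ j) must intersect every S_k with k ≠ i,j. -/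
open Matrix

/-- The columns of the concatenated matrix `[A₁, …, Aₙ]` are full spark:
every `d` of them are linearly independent. -/
def FullSpark {d n m : ℕ} (A : Fin n → Matrix (Fin d) (Fin m) ℝ) : Prop :=
  ∀ s : Finset (Fin n × Fin m), s.card = d →
    LinearIndependent ℝ (fun p : s => fun k : Fin d => A p.1.1 k p.1.2)

/-!
A hyperplane `⟨a, x⟩ = β` misses the affine subspace `{M v + c}` only if `a` is orthogonal to
every column of `M`, since otherwise `v ↦ ⟨a, M v + c⟩` is a nonconstant affine function.
So a hyperplane missing `S_i` and `S_j` and also `S_k` would have its normal orthogonal to the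
`3(d-1)/2 ≥ d` columns of `A_i, A_j, A_k`, among which, by full spark, are `d` independent
ones spanning `ℝ^d`; hence `a = 0`.
-/

namespace Matrix

variable {K ι κ : Type*} [Field K] [Fintype ι] [Fintype κ]

theorem exists_dotProduct_mulVec_add_eq {M : Matrix ι κ K} {a : ι → K} (h : a ᵥ* M ≠ 0)
    (c : ι → K) (β : K) : ∃ v, a ⬝ᵥ (M *ᵥ v + c) = β := by
  classical
  obtain ⟨p, hp⟩ := Function.ne_iff.mp h
  refine ⟨Pi.single p ((β - a ⬝ᵥ c) / (a ᵥ* M) p), ?_⟩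
  rw [dotProduct_add, dotProduct_mulVec, dotProduct_single, mul_div_cancel₀ _ hp,
    sub_add_cancel]

theorem vecMul_eq_zero_of_forall_dotProduct_mulVec_add_ne {M : Matrix ι κ K} {a c : ι → K}
    {β : K} (h : ∀ v, a ⬝ᵥ (M *ᵥ v + c) ≠ β) : a ᵥ* M = 0 := by
  by_contra hne
  obtain ⟨v, hv⟩ := exists_dotProduct_mulVec_add_eq hne c β
  exact h v hv

end Matrix

theorem eq_zero_of_dotProduct_eq_zero_of_span_eq_top {K ι κ : Type*} [CommRing K] [Fintype ι]
    {u : κ → ι → K} (hu : Submodule.span K (Set.range u) = ⊤) {a : ι → K}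
    (h : ∀ p, a ⬝ᵥ u p = 0) : a = 0 := by
  have hfun : dotProductBilin K K a = 0 :=
    LinearMap.ext_on_range hu fun p => by simpa using h p
  exact dotProduct_eq_zero a fun x => by simpa using LinearMap.congr_fun hfun x

theorem FullSpark.eq_zero_of_vecMul_eq_zero {d n m : ℕ} {A : Fin n → Matrix (Fin d) (Fin m) ℝ}
    (hA : FullSpark A) {S : Finset (Fin n)} (hS : d ≤ S.card * m) {a : Fin d → ℝ}
    (h : ∀ i ∈ S, a ᵥ* A i = 0) : a = 0 := by
  obtain ⟨t, htS, htd⟩ :=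
    Finset.exists_subset_card_eq (s := S ×ˢ (Finset.univ : Finset (Fin m))) (n := d)
      (by simpa using hS)
  have hspan := (hA t htd).span_eq_top_of_card_eq_finrank' (by simpa using htd)
  refine eq_zero_of_dotProduct_eq_zero_of_span_eq_top hspan fun ⟨⟨q, p⟩, hq⟩ => ?_
  have hqS : q ∈ S := (Finset.mem_product.mp (htS hq)).1
  simpa [vecMul, dotProduct] using congrFun (h q hqS) p

theorem tverberg_separating_hyperplane_meets_others_general {d m n : ℕ}
    (hd : Odd d) (hd3 : 3 ≤ d) (hm : m = (d - 1) / 2)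
    (A : Fin n → Matrix (Fin d) (Fin m) ℝ) (b : Fin n → Fin d → ℝ)
    (hA : FullSpark A)
    (a : Fin d → ℝ) (ha : a ≠ 0) (β : ℝ) (i j : Fin n) (hij : i ≠ j)
    (hdisji : ∀ v : Fin m → ℝ, a ⬝ᵥ (A i *ᵥ v + b i) ≠ β)
    (hdisjj : ∀ v : Fin m → ℝ, a ⬝ᵥ (A j *ᵥ v + b j) ≠ β) :
    ∀ k, k ≠ i → k ≠ j → ∃ v : Fin m → ℝ, a ⬝ᵥ (A k *ᵥ v + b k) = β := by
  intro k hki hkj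
  refine exists_dotProduct_mulVec_add_eq (fun hk => ha ?_) (b k) β
  have hcard : ({i, j, k} : Finset (Fin n)).card = 3 := by
    rw [Finset.card_eq_three]
    exact ⟨i, j, k, hij, hki.symm, hkj.symm, rfl⟩
  refine hA.eq_zero_of_vecMul_eq_zero (S := {i, j, k}) ?_ ?_
  · obtain ⟨r, rfl⟩ := hd
    rw [hcard]
    omega
  · simp only [Finset.mem_insert, Finset.mem_singleton]
    rintro q (rfl | rfl | rfl)
    exacts [vecMul_eq_zero_of_forall_dotProduct_mulVec_add_ne hdisji,
      vecMul_eq_zero_of_forall_dotProduct_mulVec_add_ne hdisjj, hk]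

theorem tverberg_separating_hyperplane_meets_others {d m n : ℕ}
    (hd : Odd d) (hd3 : 3 ≤ d) (hm : m = (d - 1) / 2)
    (A : Fin n → Matrix (Fin d) (Fin m) ℝ) (b : Fin n → Fin d → ℝ)
    (hA : FullSpark A)
    (hrank : ∀ i j, i ≠ j →
      LinearIndependent ℝ
        (Sum.elim (fun p : Fin m => fun k : Fin d => A i k p)
          (Sum.elim (fun p : Fin m => fun k : Fin d => A j k p)
            (fun _ : Unit => b i - b j))))
    (a : Fin d → ℝ) (ha : a ≠ 0) (β : ℝ) (i j : Fin n) (hij : i ≠ j)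
    (hdisji : ∀ v : Fin m → ℝ, a ⬝ᵥ (A i *ᵥ v + b i) ≠ β)
    (hdisjj : ∀ v : Fin m → ℝ, a ⬝ᵥ (A j *ᵥ v + b j) ≠ β) :
    ∀ k, k ≠ i → k ≠ j → ∃ v : Fin m → ℝ, a ⬝ᵥ (A k *ᵥ v + b k) = β :=
  tverberg_separating_hyperplane_meets_others_general hd hd3 hm A b hA a ha β i j hij hdisji hdisjj
end

section
/- Any finite set of n ≥ 1 distinct points in ℝ^d can be separated by at most n − 1 hyperplanes, i.e., there exist at most n − 1 affine hyperplanes such that any two distinct points of the set are strictly separated by at least one of them. -/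
open scoped RealInnerProductSpace

/-! Choose a direction `a` on which the points have pairwise distinct projections `⟪a, p⟫`; it
exists because the bad directions form finitely many hyperplanes `(p - q)ᗮ`, which cannot cover
the space. Sorting the `n` projections, the `n - 1` hyperplanes `⟪a, x⟫ = β` with `β` between
consecutive values separate every pair of points. -/

open Finset

theorem Finset.exists_separating_finset_card_le {α : Type*} [LinearOrder α] [DenselyOrdered α]
    (T : Finset α) :
    ∃ B : Finset α, #B ≤ #T - 1 ∧ ∀ x ∈ T, ∀ y ∈ T, x < y → ∃ b ∈ B, x < b ∧ b < y := by
  induction T using Finset.induction_on_max with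
  | empty => exact ⟨∅, by simp, by simp⟩
  | insert a s hlt ih =>
    obtain ⟨B, hBcard, hBsep⟩ := ih
    rcases s.eq_empty_or_nonempty with rfl | hs
    · exact ⟨B, by simpa using hBcard, by simp⟩
    obtain ⟨β, hmaxβ, hβa⟩ := _root_.exists_between (hlt _ (s.max'_mem hs))
    have ha : a ∉ s := fun has => (hlt a has).false
    refine ⟨insert β B, ?_, ?_⟩
    · have hs_pos := hs.card_pos
      calc #(insert β B) ≤ #B + 1 := card_insert_le _ _
        _ ≤ #(insert a s) - 1 := by rw [card_insert_of_notMem ha]; omega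
    · intro x hx y hy hxy
      rcases mem_insert.1 hy with rfl | hy
      · have hxs : x ∈ s := (mem_insert.1 hx).resolve_left hxy.ne
        exact ⟨β, mem_insert_self _ _, (s.le_max' x hxs).trans_lt hmaxβ, hβa⟩
      · have hxs : x ∈ s := (mem_insert.1 hx).resolve_left (hxy.trans (hlt y hy)).ne
        obtain ⟨b, hb, hxb, hby⟩ := hBsep x hxs y hy hxy
        exact ⟨b, mem_insert_of_mem hb, hxb, hby⟩

section InnerProductSpace

variable {E : Type*} [NormedAddCommGroup E] [InnerProductSpace ℝ E]

theorem exists_injOn_inner {S : Set E} (hS : S.Finite) : ∃ a : E, S.InjOn (⟪a, ·⟫) := by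
  have : Finite S.offDiag := hS.offDiag.to_subtype
  let P : S.offDiag → Submodule ℝ E := fun pq => (ℝ ∙ (pq.1.1 - pq.1.2))ᗮ
  have hP : ∀ i, P i ≠ ⊤ := by
    rintro ⟨⟨p, q⟩, hpq⟩ htop
    have hmem : p - q ∈ P ⟨(p, q), hpq⟩ := htop ▸ Submodule.mem_top
    rw [Submodule.mem_orthogonal_singleton_iff_inner_right, inner_self_eq_zero, sub_eq_zero] at hmem
    exact hpq.2.2 hmem
  obtain ⟨a, ha⟩ : ∃ a, a ∉ ⋃ i, (P i : Set E) := by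
    by_contra! hcover
    obtain ⟨i, hi⟩ := Subspace.exists_eq_top_of_iUnion_eq_univ (Set.eq_univ_of_forall hcover)
    exact hP i hi
  refine ⟨a, fun p hp q hq hpq => by_contra fun hne =>
    ha (Set.mem_iUnion.2 ⟨⟨(p, q), Set.mem_offDiag.2 ⟨hp, hq, hne⟩⟩, ?_⟩)⟩
  change a ∈ (ℝ ∙ (p - q))ᗮ
  rw [Submodule.mem_orthogonal_singleton_iff_inner_right, inner_sub_left,
    real_inner_comm a p, real_inner_comm a q]
  exact sub_eq_zero.2 hpq

theorem ne_zero_of_injOn_inner {S : Set E} {a : E} (h : S.InjOn (⟪a, ·⟫)) (hS : S.Nontrivial) :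
    a ≠ 0 := by
  rintro rfl
  obtain ⟨p, hp, q, hq, hpq⟩ := hS
  exact hpq (h hp hq (by simp))

end InnerProductSpace

theorem separate_points_with_card_sub_one_hyperplanes_general {d : ℕ}
    (S : Finset (EuclideanSpace ℝ (Fin d))) :
    ∃ H : Finset (EuclideanSpace ℝ (Fin d) × ℝ),
      H.card ≤ S.card - 1 ∧ (∀ h ∈ H, h.1 ≠ 0) ∧
        ∀ p ∈ S, ∀ q ∈ S, p ≠ q →
          ∃ h ∈ H, (⟪h.1, p⟫ < h.2 ∧ h.2 < ⟪h.1, q⟫) ∨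
            (⟪h.1, q⟫ < h.2 ∧ h.2 < ⟪h.1, p⟫) := by
  obtain ⟨a, ha⟩ := exists_injOn_inner S.finite_toSet
  have hcard : #(S.image (⟪a, ·⟫)) = #S := card_image_of_injOn ha
  obtain ⟨B, hBcard, hBsep⟩ := (S.image (⟪a, ·⟫)).exists_separating_finset_card_le
  refine ⟨B.image (a, ·), ?_, ?_, ?_⟩
  · exact card_image_le.trans (hcard ▸ hBcard)
  · simp only [mem_image]
    rintro _ ⟨β, hβ, rfl⟩
    have hB_pos := card_pos.2 ⟨β, hβ⟩
    exact ne_zero_of_injOn_inner ha (one_lt_card_iff_nontrivial.1 (by omega))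
  · intro p hp q hq hpq
    have hp' := mem_image_of_mem (⟪a, ·⟫) hp
    have hq' := mem_image_of_mem (⟪a, ·⟫) hq
    rcases (ha.ne hp hq hpq).lt_or_gt with hlt | hlt
    · obtain ⟨β, hβ, h₁, h₂⟩ := hBsep _ hp' _ hq' hlt
      exact ⟨(a, β), mem_image_of_mem _ hβ, .inl ⟨h₁, h₂⟩⟩
    · obtain ⟨β, hβ, h₁, h₂⟩ := hBsep _ hq' _ hp' hlt
      exact ⟨(a, β), mem_image_of_mem _ hβ, .inr ⟨h₁, h₂⟩⟩

theorem separate_points_with_card_sub_one_hyperplanes {d : ℕ}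
    (S : Finset (EuclideanSpace ℝ (Fin d))) (hS : S.Nonempty) :
    ∃ H : Finset (EuclideanSpace ℝ (Fin d) × ℝ),
      H.card ≤ S.card - 1 ∧ (∀ h ∈ H, h.1 ≠ 0) ∧
        ∀ p ∈ S, ∀ q ∈ S, p ≠ q →
          ∃ h ∈ H, (⟪h.1, p⟫ < h.2 ∧ h.2 < ⟪h.1, q⟫) ∨
            (⟪h.1, q⟫ < h.2 ∧ h.2 < ⟪h.1, p⟫) :=
  separate_points_with_card_sub_one_hyperplanes_general S
end
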